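/- arXiv:2410.08732 — 2 statements merged into one kernel-verified Lean document; each statement's English description precedes it below -/
import Mathlib

section
/- There is an absolute constant C > 0 such that for every prime p, every positive integer k with gcd(k, p) = 1, setting t = k·(p−1), and every a ∈ F_{p²} with a ≠ 0, the number of pairs (x, y) ∈ F_{p²}² with x^t + y^t + a = 0 is at most C·(t^{6/5}·p^{8/5} + p³). -/
open Polynomial Finset

private lemma stmt_10_fiber {F : Type*} [Field F] [Fintype F] [DecidableEq F] {t : ℕ}
    (ht : 0 < t) (u : F) :
    (univ.filter fun x : F => x ^ t = u).card ≤ min t (Fintype.card F - 1) := by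
  refine le_min ?_ ?_
  · have hpoly : (X ^ t - C u : F[X]) ≠ 0 := X_pow_sub_C_ne_zero ht u
    calc (univ.filter fun x : F => x ^ t = u).card
        ≤ (X ^ t - C u : F[X]).roots.toFinset.card := by
          refine card_le_card ?_
          intro x hx
          simp only [mem_filter, mem_univ, true_and] at hx
          rw [Multiset.mem_toFinset, mem_roots hpoly]
          simp [IsRoot, sub_eq_zero, hx]
      _ ≤ Multiset.card (X ^ t - C u : F[X]).roots := Multiset.toFinset_card_le _
      _ ≤ (X ^ t - C u : F[X]).natDegree := card_roots' _
      _ = t := natDegree_X_pow_sub_C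
  · by_cases hu : u = 0
    · subst hu
      have : (univ.filter fun x : F => x ^ t = 0) = {0} := by
        ext x
        simp [pow_eq_zero_iff ht.ne']
      rw [this, card_singleton]
      have := Fintype.one_lt_card (α := F)
      omega
    · calc (univ.filter fun x : F => x ^ t = u).card
          ≤ (univ.erase (0:F)).card := by
            refine card_le_card ?_
            intro x hx
            simp only [mem_filter, mem_univ, true_and] at hx
            refine mem_erase.mpr ⟨?_, mem_univ x⟩
            rintro rfl
            exact hu (by rw [← hx, zero_pow ht.ne'])
        _ = Fintype.card F - 1 := by rw [card_erase_of_mem (mem_univ _), card_univ]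

/-- **Point-count bound for the Fermat-type curve `x^t + y^t + a = 0` over
`𝔽_{p²}` with `t = k(p-1)`** (Lemma 2.8). -/
theorem stmt_10 :
    ∃ C : ℝ, 0 < C ∧
      ∀ (p : ℕ) [Fact p.Prime],
      ∀ (k : ℕ), 0 < k → Nat.gcd k p = 1 →
      ∀ a : GaloisField p 2, a ≠ 0 →
        (Nat.card {xy : GaloisField p 2 × GaloisField p 2 //
            xy.1 ^ (k * (p - 1)) + xy.2 ^ (k * (p - 1)) + a = 0} : ℝ) ≤
          C * (((k * (p - 1) : ℕ) : ℝ) ^ ((6 : ℝ) / 5) * (p : ℝ) ^ ((8 : ℝ) / 5)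
                + (p : ℝ) ^ 3) := by
  classical
  refine ⟨4, by norm_num, ?_⟩
  intro p hp k hk hkp a ha
  have hp2 : 2 ≤ p := hp.out.two_le
  set t := k * (p - 1) with htdef
  have ht : 0 < t := Nat.mul_pos hk (by omega)
  letI : Fintype (GaloisField p 2) := Fintype.ofFinite _
  have hcardF : Fintype.card (GaloisField p 2) = p ^ 2 := by
    rw [← Nat.card_eq_fintype_card]; exact GaloisField.card p 2 two_ne_zero
  have hq4 : 4 ≤ p ^ 2 := by nlinarith
  set n := min t (p ^ 2 - 1) with hndef
  have hn1 : 1 ≤ n := le_min ht (by omega)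
  -- the solution set as a finset
  set S : Finset (GaloisField p 2 × GaloisField p 2) :=
    univ.filter (fun xy => xy.1 ^ t + xy.2 ^ t + a = 0) with hSdef
  have hNat : Nat.card {xy : GaloisField p 2 × GaloisField p 2 //
      xy.1 ^ t + xy.2 ^ t + a = 0} = S.card := by
    rw [Nat.card_eq_fintype_card, Fintype.card_subtype]
  -- setup for the image bound
  set c : GaloisField p 2 := -a with hcdef
  have hc0 : c ≠ 0 := neg_ne_zero.mpr ha
  have hcp : c ^ p ≠ 0 := pow_ne_zero _ hc0
  set w : GaloisField p 2 := c * (c ^ p)⁻¹ with hwdef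
  set P2 : (GaloisField p 2)[X] := C 1 * X ^ 2 + C (-c) * X + C w with hP2def
  have hP2deg : P2.natDegree = 2 := natDegree_quadratic one_ne_zero
  have hP2ne : P2 ≠ 0 := by
    intro h
    rw [h, natDegree_zero] at hP2deg
    exact two_ne_zero hP2deg.symm
  have hpp : (p - 1) * (p + 1) = p ^ 2 - 1 := by
    obtain ⟨m, rfl⟩ : ∃ m, p = m + 1 := ⟨p - 1, by omega⟩
    rw [Nat.add_sub_cancel]
    symm
    exact Nat.sub_eq_of_eq_add (by ring)
  set f : GaloisField p 2 × GaloisField p 2 → GaloisField p 2 × GaloisField p 2 :=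
    fun xy => (xy.1 ^ t, xy.2 ^ t) with hfdef
  set Q : Finset (GaloisField p 2 × GaloisField p 2) :=
    insert (0, c) (insert (c, 0) (P2.roots.toFinset.image fun u => (u, c - u))) with hQdef
  have hQcard : Q.card ≤ 4 := by
    calc Q.card ≤ (insert (c, (0:GaloisField p 2))
            (P2.roots.toFinset.image fun u => (u, c - u))).card + 1 := card_insert_le _ _
      _ ≤ ((P2.roots.toFinset.image fun u => (u, c - u)).card + 1) + 1 := by
          exact Nat.add_le_add_right (card_insert_le _ _) 1
      _ ≤ (P2.roots.toFinset.card + 1) + 1 := by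
          exact Nat.add_le_add_right (Nat.add_le_add_right (card_image_le) 1) 1
      _ ≤ (Multiset.card P2.roots + 1) + 1 := by
          exact Nat.add_le_add_right (Nat.add_le_add_right (Multiset.toFinset_card_le _) 1) 1
      _ ≤ 4 := by
          have := card_roots' P2
          omega
  have himage : S.image f ⊆ Q := by
    intro uv huv
    rw [mem_image] at huv
    obtain ⟨⟨x, y⟩, hxy, rfl⟩ := huv
    rw [hSdef, mem_filter] at hxy
    have hsum : x ^ t + y ^ t = c := by
      rw [hcdef]
      linear_combination hxy.2
    by_cases hx : x = 0
    · subst hx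
      have : f (0, y) = (0, c) := by
        simp only [hfdef]
        rw [zero_pow ht.ne']
        rw [zero_pow ht.ne', zero_add] at hsum
        rw [hsum]
      rw [this]
      exact mem_insert_self _ _
    by_cases hy : y = 0
    · subst hy
      have : f (x, 0) = (c, 0) := by
        simp only [hfdef]
        rw [zero_pow ht.ne']
        rw [zero_pow ht.ne', add_zero] at hsum
        rw [hsum]
      rw [this]
      exact mem_insert_of_mem (mem_insert_self _ _)
    · set u := x ^ t with hu
      set v := y ^ t with hv
      have hu0 : u ≠ 0 := pow_ne_zero _ hx
      have hv0 : v ≠ 0 := pow_ne_zero _ hy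
      have hq1 : ∀ z : GaloisField p 2, z ≠ 0 → (z ^ t) ^ (p + 1) = 1 := by
        intro z hz
        have hz1 : z ^ (p ^ 2 - 1) = 1 := by
          have := FiniteField.pow_card_sub_one_eq_one z hz
          rwa [hcardF] at this
        rw [← pow_mul]
        have harith : t * (p + 1) = (p ^ 2 - 1) * k := by
          rw [htdef, ← hpp]; ring
        rw [harith, pow_mul, hz1, one_pow]
      have hup : u ^ p = u⁻¹ := by
        refine eq_inv_of_mul_eq_one_left ?_
        rw [← pow_succ]
        exact hq1 x hx
      have hvp : v ^ p = v⁻¹ := by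
        refine eq_inv_of_mul_eq_one_left ?_
        rw [← pow_succ]
        exact hq1 y hy
      have hfrob : c ^ p = u⁻¹ + v⁻¹ := by
        rw [← hsum, add_pow_char, hup, hvp]
      have hmul : u * v = w := by
        have h1 : c ^ p * (u * v) = c := by
          rw [hfrob, ← hsum]
          field_simp
          ring
        rw [hwdef]
        field_simp
        linear_combination h1
      have hveq : v = c - u := by linear_combination hsum
      have hroot : u ∈ P2.roots.toFinset := by
        rw [Multiset.mem_toFinset, mem_roots hP2ne]
        simp only [hP2def, IsRoot, eval_add, eval_mul, eval_pow, eval_C, eval_X, one_mul]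
        rw [← hmul, hveq]
        ring
      have : f (x, y) = (u, c - u) := by
        simp only [hfdef, ← hu, ← hv, hveq]
      rw [this]
      exact mem_insert_of_mem (mem_insert_of_mem (mem_image_of_mem _ hroot))
  have hfiber : ∀ u : GaloisField p 2, (univ.filter fun x => x ^ t = u).card ≤ n := by
    intro u
    have := stmt_10_fiber ht u
    rwa [hcardF, ← hndef] at this
  have hkey : S.card ≤ 4 * n ^ 2 := by
    have h1 : S.card ≤ (n * n) * (S.image f).card := by
      refine card_le_mul_card_image S (n * n) ?_
      intro b _
      calc (S.filter fun xy => f xy = b).card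
          ≤ ((univ.filter fun x => x ^ t = b.1) ×ˢ (univ.filter fun x => x ^ t = b.2)).card := by
            refine card_le_card ?_
            intro xy hxy
            rw [mem_filter] at hxy
            have hb := hxy.2
            rw [hfdef] at hb
            rw [mem_product, mem_filter, mem_filter]
            constructor
            · exact ⟨mem_univ _, by rw [← hb]⟩
            · exact ⟨mem_univ _, by rw [← hb]⟩
        _ ≤ n * n := by
            rw [card_product]
            exact Nat.mul_le_mul (hfiber _) (hfiber _)
    have h2 : (S.image f).card ≤ 4 := le_trans (card_le_card himage) hQcard
    calc S.card ≤ (n * n) * (S.image f).card := h1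
      _ ≤ (n * n) * 4 := Nat.mul_le_mul_left _ h2
      _ = 4 * n ^ 2 := by ring
  -- pass to the reals
  rw [hNat]
  have hle : (S.card : ℝ) ≤ 4 * (n : ℝ) ^ 2 := by exact_mod_cast hkey
  have hn0 : (0:ℝ) < (n : ℝ) := by exact_mod_cast hn1
  have hnt : (n : ℝ) ≤ (t : ℝ) := by exact_mod_cast min_le_left t (p ^ 2 - 1)
  have hnp : (n : ℝ) ≤ (p : ℝ) ^ (2:ℕ) := by
    have : n ≤ p ^ 2 := le_trans (min_le_right _ _) (Nat.sub_le _ _)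
    exact_mod_cast this
  have e1 : (n : ℝ) ^ (2:ℕ) = (n : ℝ) ^ ((6:ℝ)/5) * (n : ℝ) ^ ((4:ℝ)/5) := by
    rw [← Real.rpow_natCast (n : ℝ) 2, ← Real.rpow_add hn0]
    norm_num
  have e2 : (n : ℝ) ^ ((6:ℝ)/5) ≤ (t : ℝ) ^ ((6:ℝ)/5) :=
    Real.rpow_le_rpow (by positivity) hnt (by norm_num)
  have e3 : (n : ℝ) ^ ((4:ℝ)/5) ≤ (p : ℝ) ^ ((8:ℝ)/5) := by
    have h1 : (n : ℝ) ^ ((4:ℝ)/5) ≤ ((p : ℝ) ^ (2:ℕ)) ^ ((4:ℝ)/5) :=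
      Real.rpow_le_rpow (by positivity) hnp (by norm_num)
    refine le_trans h1 (le_of_eq ?_)
    rw [← Real.rpow_natCast (p : ℝ) 2, ← Real.rpow_mul (by positivity)]
    norm_num
  have emain : (n : ℝ) ^ 2 ≤ (t : ℝ) ^ ((6:ℝ)/5) * (p : ℝ) ^ ((8:ℝ)/5) := by
    calc (n : ℝ) ^ 2 = (n : ℝ) ^ ((6:ℝ)/5) * (n : ℝ) ^ ((4:ℝ)/5) := e1
      _ ≤ (t : ℝ) ^ ((6:ℝ)/5) * (p : ℝ) ^ ((8:ℝ)/5) :=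
          mul_le_mul e2 e3 (by positivity) (by positivity)
  calc (S.card : ℝ) ≤ 4 * (n : ℝ) ^ 2 := hle
    _ ≤ 4 * ((t : ℝ) ^ ((6:ℝ)/5) * (p : ℝ) ^ ((8:ℝ)/5)) := by linarith
    _ ≤ 4 * ((t : ℝ) ^ ((6:ℝ)/5) * (p : ℝ) ^ ((8:ℝ)/5) + (p : ℝ) ^ 3) := by
        have : (0:ℝ) ≤ (p : ℝ) ^ 3 := by positivity
        linarith
end

section
/- Let K be an algebraically closed field of prime characteristic p and let A ∈ K with A ≠ 0. Then the polynomial F_1 = X²Y + XY² + X + Y + A·XY is irreducible in K[X,Y]. -/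
open Polynomial

private lemma coeffs_eq {R : Type*} [CommRing R] {u v w u' v' w' : R}
    (h : C u * X ^ 2 + C v * X + C w = C u' * X ^ 2 + C v' * X + C w') :
    u = u' ∧ v = v' ∧ w = w' := by
  refine ⟨?_, ?_, ?_⟩
  · have := congrArg (fun f => coeff f 2) h
    simpa [coeff_X_pow] using this
  · have := congrArg (fun f => coeff f 1) h
    simpa [coeff_X_pow] using this
  · have := congrArg (fun f => coeff f 0) h
    simpa [coeff_X_pow] using this

private lemma coeff_quad2 {R : Type*} [CommRing R] (u v w : R) :
    (C u * X ^ 2 + C v * X + C w).coeff 2 = u := by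
  simp [coeff_X_pow]

private lemma coeff_quad1 {R : Type*} [CommRing R] (u v w : R) :
    (C u * X ^ 2 + C v * X + C w).coeff 1 = v := by
  simp [coeff_X_pow]

private lemma aux2 {K : Type*} [Field K] (A : K) (hA : A ≠ 0) :
    Irreducible (C (X : K[X]) * X ^ 2 + C ((X : K[X]) ^ 2 + C A * X + 1) * X + C (X : K[X])) := by
  set q : K[X][X] := C (X : K[X]) * X ^ 2 + C ((X : K[X]) ^ 2 + C A * X + 1) * X + C (X : K[X])
    with hq
  have hdeg : q.natDegree = 2 := by
    rw [hq]; compute_degree!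
  have hq0 : q ≠ 0 := by
    intro h
    rw [h] at hdeg
    simp at hdeg
  constructor
  · intro h
    have := natDegree_eq_zero_of_isUnit h
    omega
  · intro G H hGH
    have hG0 : G ≠ 0 := fun h => hq0 (by rw [hGH, h, zero_mul])
    have hH0 : H ≠ 0 := fun h => hq0 (by rw [hGH, h, mul_zero])
    have hsum : G.natDegree + H.natDegree = 2 := by
      rw [← natDegree_mul hG0 hH0, ← hGH, hdeg]
    -- helper: a degree-zero factor is a unit
    have key : ∀ P : K[X][X], P ∣ q → P.natDegree = 0 → IsUnit P := by
      intro P hP h0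
      obtain ⟨g, rfl⟩ := natDegree_eq_zero.1 h0
      rw [C_dvd_iff_dvd_coeff] at hP
      have hc2 : q.coeff 2 = (X : K[X]) := by rw [hq]; exact coeff_quad2 _ _ _
      have hc1 : q.coeff 1 = (X : K[X]) ^ 2 + C A * X + 1 := by rw [hq]; exact coeff_quad1 _ _ _
      have h2 : g ∣ (X : K[X]) := hc2 ▸ hP 2
      have h1 : g ∣ (X : K[X]) ^ 2 + C A * X + 1 := hc1 ▸ hP 1
      have : g ∣ 1 := by
        have := dvd_sub h1 (h2.mul_right ((X : K[X]) + C A))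
        have he : (X : K[X]) ^ 2 + C A * X + 1 - X * (X + C A) = 1 := by ring
        rwa [he] at this
      exact isUnit_C.mpr (isUnit_of_dvd_one this)
    rcases Nat.eq_zero_or_pos G.natDegree with hG | hGpos
    · exact Or.inl (key G ⟨H, hGH⟩ hG)
    rcases Nat.eq_zero_or_pos H.natDegree with hH | hHpos
    · exact Or.inr (key H ⟨G, by rw [hGH, mul_comm]⟩ hH)
    exfalso
    have hGd : G.natDegree = 1 := by omega
    have hHd : H.natDegree = 1 := by omega
    have hGe : G = C (G.coeff 1) * X + C (G.coeff 0) := by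
      apply eq_X_add_C_of_degree_le_one
      rw [degree_eq_natDegree hG0, hGd]; exact_mod_cast le_refl _
    have hHe : H = C (H.coeff 1) * X + C (H.coeff 0) := by
      apply eq_X_add_C_of_degree_le_one
      rw [degree_eq_natDegree hH0, hHd]; exact_mod_cast le_refl _
    set a := G.coeff 1; set b := G.coeff 0; set c := H.coeff 1; set d := H.coeff 0
    have hexp : C (X : K[X]) * X ^ 2 + C ((X : K[X]) ^ 2 + C A * X + 1) * X + C (X : K[X])
        = C (a * c) * X ^ 2 + C (a * d + b * c) * X + C (b * d) := by
      rw [hq] at hGH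
      rw [hGH, hGe, hHe]
      simp only [C_mul, C_add]
      ring
    obtain ⟨hac', hmid', hbd'⟩ := coeffs_eq hexp
    have hac := hac'.symm
    have hmid := hmid'.symm
    have hbd := hbd'.symm
    rcases irreducible_X.isUnit_or_isUnit hac' with hua | huc <;>
      rcases irreducible_X.isUnit_or_isUnit hbd' with hub | hud
    · -- a, b units
      obtain ⟨α, hα, ha⟩ := isUnit_iff.1 hua
      obtain ⟨β, hβ, hb⟩ := isUnit_iff.1 hub
      rw [← ha, ← hb] at hmid
      rw [← ha] at hac; rw [← hb] at hbd
      have hαn : α ≠ 0 := hα.ne_zero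
      have hβn : β ≠ 0 := hβ.ne_zero
      have hc : c = C α⁻¹ * X := by
        rw [← hac, ← mul_assoc, ← C_mul, inv_mul_cancel₀ hαn, C_1, one_mul]
      have hd : d = C β⁻¹ * X := by
        rw [← hbd, ← mul_assoc, ← C_mul, inv_mul_cancel₀ hβn, C_1, one_mul]
      rw [hc, hd] at hmid
      have key2 : C (0 : K) * X ^ 2 + C (α * β⁻¹ + β * α⁻¹) * X + C 0
          = C 1 * X ^ 2 + C A * X + C 1 := by
        rw [C_1, one_mul, ← hmid]
        simp only [C_add, C_mul, C_0]
        ring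
      exact one_ne_zero (coeffs_eq key2).1.symm
    · -- a, d units
      obtain ⟨α, hα, ha⟩ := isUnit_iff.1 hua
      obtain ⟨δ, hδ, hd'⟩ := isUnit_iff.1 hud
      rw [← ha, ← hd'] at hmid
      rw [← ha] at hac; rw [← hd'] at hbd
      have hαn : α ≠ 0 := hα.ne_zero
      have hδn : δ ≠ 0 := hδ.ne_zero
      have hc : c = C α⁻¹ * X := by
        rw [← hac, ← mul_assoc, ← C_mul, inv_mul_cancel₀ hαn, C_1, one_mul]
      have hb : b = C δ⁻¹ * X := by
        rw [← hbd, mul_comm b (C δ), ← mul_assoc, ← C_mul, inv_mul_cancel₀ hδn, C_1, one_mul]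
      rw [hc, hb] at hmid
      have key2 : C (δ⁻¹ * α⁻¹) * X ^ 2 + C (0 : K) * X + C (α * δ)
          = C 1 * X ^ 2 + C A * X + C 1 := by
        rw [C_1, one_mul, ← hmid]
        simp only [C_add, C_mul, C_0]
        ring
      exact hA (coeffs_eq key2).2.1.symm
    · -- c, b units
      obtain ⟨γ, hγ, hc'⟩ := isUnit_iff.1 huc
      obtain ⟨β, hβ, hb⟩ := isUnit_iff.1 hub
      rw [← hc', ← hb] at hmid
      rw [← hc'] at hac; rw [← hb] at hbd
      have hγn : γ ≠ 0 := hγ.ne_zero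
      have hβn : β ≠ 0 := hβ.ne_zero
      have ha : a = C γ⁻¹ * X := by
        rw [← hac, mul_comm a (C γ), ← mul_assoc, ← C_mul, inv_mul_cancel₀ hγn, C_1, one_mul]
      have hd : d = C β⁻¹ * X := by
        rw [← hbd, ← mul_assoc, ← C_mul, inv_mul_cancel₀ hβn, C_1, one_mul]
      rw [ha, hd] at hmid
      have key2 : C (γ⁻¹ * β⁻¹) * X ^ 2 + C (0 : K) * X + C (β * γ)
          = C 1 * X ^ 2 + C A * X + C 1 := by
        rw [C_1, one_mul, ← hmid]
        simp only [C_add, C_mul, C_0]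
        ring
      exact hA (coeffs_eq key2).2.1.symm
    · -- c, d units
      obtain ⟨γ, hγ, hc'⟩ := isUnit_iff.1 huc
      obtain ⟨δ, hδ, hd'⟩ := isUnit_iff.1 hud
      rw [← hc', ← hd'] at hmid
      rw [← hc'] at hac; rw [← hd'] at hbd
      have hγn : γ ≠ 0 := hγ.ne_zero
      have hδn : δ ≠ 0 := hδ.ne_zero
      have ha : a = C γ⁻¹ * X := by
        rw [← hac, mul_comm a (C γ), ← mul_assoc, ← C_mul, inv_mul_cancel₀ hγn, C_1, one_mul]
      have hb : b = C δ⁻¹ * X := by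
        rw [← hbd, mul_comm b (C δ), ← mul_assoc, ← C_mul, inv_mul_cancel₀ hδn, C_1, one_mul]
      rw [ha, hb] at hmid
      have key2 : C (0 : K) * X ^ 2 + C (γ⁻¹ * δ + δ⁻¹ * γ) * X + C 0
          = C 1 * X ^ 2 + C A * X + C 1 := by
        rw [C_1, one_mul, ← hmid]
        simp only [C_add, C_mul, C_0]
        ring
      exact one_ne_zero (coeffs_eq key2).1.symm

/-- **Absolute irreducibility of `F₁ = X²Y + XY² + X + Y + A·XY`** over an
algebraically closed field of characteristic `p`, for `A ≠ 0`
(used in the proof of Lemma 2.5). -/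
theorem stmt_13 (K : Type*) [Field K] [IsAlgClosed K] (p : ℕ) (hp : p.Prime)
    [CharP K p] (A : K) (hA : A ≠ 0) :
    Irreducible
      ((MvPolynomial.X 0) ^ 2 * MvPolynomial.X 1
        + MvPolynomial.X 0 * (MvPolynomial.X 1) ^ 2
        + MvPolynomial.X 0 + MvPolynomial.X 1
        + MvPolynomial.C A * (MvPolynomial.X 0 * MvPolynomial.X 1) :
        MvPolynomial (Fin 2) K) := by
  let inner : MvPolynomial (Fin 1) K ≃ₐ[K] K[X] :=
    (MvPolynomial.finSuccEquiv K 0).trans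
      (Polynomial.mapAlgEquiv (MvPolynomial.isEmptyAlgEquiv K (Fin 0)))
  let e : MvPolynomial (Fin 2) K ≃ₐ[K] K[X][X] :=
    (MvPolynomial.finSuccEquiv K 1).trans (Polynomial.mapAlgEquiv inner)
  rw [← MulEquiv.irreducible_iff e.toMulEquiv]
  have h0 : e (MvPolynomial.X 0) = (X : K[X][X]) := by
    simp [e, inner, MvPolynomial.finSuccEquiv_X_zero]
  have h1 : e (MvPolynomial.X 1) = C (X : K[X]) := by
    rw [show (1 : Fin 2) = Fin.succ 0 from rfl]
    simp only [e, AlgEquiv.trans_apply, MvPolynomial.finSuccEquiv_X_succ]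
    simp [inner, Polynomial.map_C, MvPolynomial.finSuccEquiv_X_zero]
  have hC : e (MvPolynomial.C A) = C (C A) := by
    rw [show (MvPolynomial.C A : MvPolynomial (Fin 2) K) = algebraMap K _ A from rfl]
    rw [AlgEquiv.commutes]
    simp [Polynomial.algebraMap_apply]
  have hF : e ((MvPolynomial.X 0) ^ 2 * MvPolynomial.X 1
        + MvPolynomial.X 0 * (MvPolynomial.X 1) ^ 2
        + MvPolynomial.X 0 + MvPolynomial.X 1
        + MvPolynomial.C A * (MvPolynomial.X 0 * MvPolynomial.X 1))
      = C (X : K[X]) * X ^ 2 + C ((X : K[X]) ^ 2 + C A * X + 1) * X + C (X : K[X]) := by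
    simp only [map_add, map_mul, map_pow, h0, h1, hC]
    simp only [C_add, C_mul, C_pow, C_1]
    ring
  show Irreducible (e _)
  rw [hF]
  exact aux2 A hA
end
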